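/- arXiv:2306.06758 — 2 statements merged into one kernel-verified Lean document; each statement's English description precedes it below -/
import Mathlib

section
/- Let m be an invariant density for a transition kernel p(t,x,y) satisfying the two-sided Aronson bounds with constant C = C_T ≥ 1 on (0,T], i.e. m(y) = ∫ m(x) p(t,x,y) dx for all t > 0, with ∫ m = 1 and m continuous. If p(t,x,y) → m(y) pointwise as t → ∞ (for each fixed x,y), then for all y ∈ ℝ^d: C T^{-d/2} ≥ m(y) ≥ 2^{-d} C^{-2(d+2)} exp(-2C|y|^2/T) · m(0). -/
/-!
Upper bound: `m(y) = ∫ m(x) p(T, x, y) dx` is an average of `p(T, ·, y) ≤ C T^{-d/2}`.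

Lower bound: with `u = T / (2C²)`, the Aronson upper bound for `p(u, z, 0)`, the lower bound for
`p(T, z, y)` and `|z - y|² ≤ 2|z|² + 2|y|²` give `K p(u, z, 0) ≤ p(T, z, y)` for all `z`, where
`K = 2^{-d} C^{-2(d+2)} e^{-2C|y|²/T}`. Chapman–Kolmogorov turns this into
`K p(t + u, 0, 0) ≤ p(t + T, 0, y)`, and letting `t → ∞` gives `K m(0) ≤ m(y)`.
-/

open Real MeasureTheory Filter Topology

section Kernel

variable {E : Type*} {p : ℝ → E → E → ℝ}

lemma nonneg_of_tendsto_kernel (hpos : ∀ t, 0 < t → ∀ x y, 0 < p t x y) {m : E → ℝ}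
    (hconv : ∀ x y, Tendsto (fun t => p t x y) atTop (𝓝 (m y))) (y : E) : 0 ≤ m y :=
  ge_of_tendsto (hconv y y) ((eventually_gt_atTop 0).mono fun t ht => (hpos t ht y y).le)

variable [MeasurableSpace E] {μ : Measure E}

lemma integrable_of_chapmanKolmogorov (hpos : ∀ t, 0 < t → ∀ x y, 0 < p t x y)
    (hCK : ∀ s u, 0 < s → 0 < u → ∀ x y, p (s + u) x y = ∫ z, p s x z * p u z y ∂μ)
    {s u : ℝ} (hs : 0 < s) (hu : 0 < u) (x y : E) :
    Integrable (fun z => p s x z * p u z y) μ :=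
  Integrable.of_integral_ne_zero <| by
    rw [← hCK s u hs hu x y]
    exact (hpos _ (add_pos hs hu) x y).ne'

lemma chapmanKolmogorov_mono (hpos : ∀ t, 0 < t → ∀ x y, 0 < p t x y)
    (hCK : ∀ s u, 0 < s → 0 < u → ∀ x y, p (s + u) x y = ∫ z, p s x z * p u z y ∂μ)
    {K t u v : ℝ} (ht : 0 < t) (hu : 0 < u) (hv : 0 < v) {x x' y : E}
    (h : ∀ z, K * p u z x' ≤ p v z y) :
    K * p (t + u) x x' ≤ p (t + v) x y := by
  rw [hCK t u ht hu, hCK t v ht hv, ← integral_const_mul]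
  refine integral_mono ((integrable_of_chapmanKolmogorov hpos hCK ht hu x x').const_mul K)
    (integrable_of_chapmanKolmogorov hpos hCK ht hv x y) fun z => ?_
  calc K * (p t x z * p u z x') = p t x z * (K * p u z x') := by ring
    _ ≤ p t x z * p v z y := mul_le_mul_of_nonneg_left (h z) (hpos t ht x z).le

lemma mul_le_of_kernel_comparison (hpos : ∀ t, 0 < t → ∀ x y, 0 < p t x y)
    (hCK : ∀ s u, 0 < s → 0 < u → ∀ x y, p (s + u) x y = ∫ z, p s x z * p u z y ∂μ)
    {m : E → ℝ} (hconv : ∀ x y, Tendsto (fun t => p t x y) atTop (𝓝 (m y)))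
    {K u v : ℝ} (hu : 0 < u) (hv : 0 < v) {x' y : E} (h : ∀ z, K * p u z x' ≤ p v z y)
    (x : E) : K * m x' ≤ m y := by
  have shift (w : ℝ) (x'' : E) : Tendsto (fun t => p (t + w) x x'') atTop (𝓝 (m x'')) :=
    (hconv x x'').comp (tendsto_atTop_add_const_right atTop w tendsto_id)
  exact le_of_tendsto_of_tendsto ((shift u x').const_mul K) (shift v y)
    ((eventually_gt_atTop 0).mono fun t ht => chapmanKolmogorov_mono hpos hCK ht hu hv h)

lemma invariant_le_of_kernel_le {m : E → ℝ} (hm : ∀ x, 0 ≤ m x) (hm1 : ∫ x, m x ∂μ = 1)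
    {t M : ℝ} {y : E}
    (hinv : m y = ∫ x, m x * p t x y ∂μ) (hp : ∀ x, 0 ≤ p t x y) (hM : ∀ x, p t x y ≤ M) :
    m y ≤ M :=
  calc m y = ∫ x, m x * p t x y ∂μ := hinv
    _ ≤ ∫ x, m x * M ∂μ :=
      integral_mono_of_nonneg (.of_forall fun x => mul_nonneg (hm x) (hp x))
        ((Integrable.of_integral_ne_zero (by simp [hm1])).mul_const M)
        (.of_forall fun x => mul_le_mul_of_nonneg_left (hM x) (hm x))
    _ = M := by rw [integral_mul_const, hm1, one_mul]

end Kernel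

section Gaussian

variable {D T C : ℝ}

lemma div_rpow_mul_exp_le (hC : 0 ≤ C) (hT : 0 < T) (r : ℝ) :
    C / T ^ (D / 2) * exp (-r ^ 2 / (C * T)) ≤ C * T ^ (-D / 2) := by
  have hexp : exp (-r ^ 2 / (C * T)) ≤ 1 :=
    exp_le_one_iff.2 (div_nonpos_of_nonpos_of_nonneg (neg_nonpos.2 (sq_nonneg r)) (by positivity))
  calc C / T ^ (D / 2) * exp (-r ^ 2 / (C * T)) ≤ C / T ^ (D / 2) :=
        mul_le_of_le_one_right (by positivity) hexp
    _ = C * T ^ (-D / 2) := by rw [neg_div, rpow_neg hT.le, div_eq_mul_inv]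

lemma gaussian_prefactor_le (hD : 0 ≤ D) (hT : 0 < T) (hC : 1 ≤ C) :
    2 ^ (-D) * C ^ (-2 * (D + 2)) * (C / (T / (2 * C ^ 2)) ^ (D / 2)) ≤ 1 / (C * T ^ (D / 2)) := by
  have hC0 : 0 < C := one_pos.trans_le hC
  have hsplit : (T / (2 * C ^ 2)) ^ (D / 2) = T ^ (D / 2) / (2 ^ (D / 2) * C ^ D) := by
    rw [div_rpow hT.le (by positivity), mul_rpow (by norm_num) (by positivity),
      ← rpow_natCast C 2, ← rpow_mul hC0.le]
    ring_nf
  have hsmall : 2 ^ (-D) * 2 ^ (D / 2) * (C ^ (-2 * (D + 2)) * C ^ D * C ^ (2 : ℝ)) ≤ 1 := by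
    rw [← rpow_add two_pos, ← rpow_add hC0, ← rpow_add hC0]
    exact mul_le_one₀ (rpow_le_one_of_one_le_of_nonpos one_le_two (by linarith)) (by positivity)
      (rpow_le_one_of_one_le_of_nonpos hC (by linarith))
  calc 2 ^ (-D) * C ^ (-2 * (D + 2)) * (C / (T / (2 * C ^ 2)) ^ (D / 2))
      = 2 ^ (-D) * 2 ^ (D / 2) * (C ^ (-2 * (D + 2)) * C ^ D * C ^ (2 : ℝ)) *
          (1 / (C * T ^ (D / 2))) := by
        rw [hsplit, rpow_two]
        field_simp
    _ ≤ 1 / (C * T ^ (D / 2)) := mul_le_of_le_one_left (by positivity) hsmall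

lemma exp_mul_exp_le (hT : 0 < T) (hC : 0 < C) {a b r : ℝ} (hr : r ^ 2 ≤ 2 * a ^ 2 + 2 * b ^ 2) :
    exp (-2 * C * b ^ 2 / T) * exp (-a ^ 2 / (C * (T / (2 * C ^ 2)))) ≤ exp (-C * r ^ 2 / T) := by
  have ha : -a ^ 2 / (C * (T / (2 * C ^ 2))) = -2 * C * a ^ 2 / T := by field_simp
  rw [← exp_add, exp_le_exp, ha, ← add_div]
  exact div_le_div_of_nonneg_right (by nlinarith) hT.le

lemma gaussian_comparison (hD : 0 ≤ D) (hT : 0 < T) (hC : 1 ≤ C) {a b r : ℝ}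
    (hr : r ^ 2 ≤ 2 * a ^ 2 + 2 * b ^ 2) :
    2 ^ (-D) * C ^ (-2 * (D + 2)) * exp (-2 * C * b ^ 2 / T) *
        (C / (T / (2 * C ^ 2)) ^ (D / 2) * exp (-a ^ 2 / (C * (T / (2 * C ^ 2)))))
      ≤ 1 / (C * T ^ (D / 2)) * exp (-C * r ^ 2 / T) :=
  calc _ = 2 ^ (-D) * C ^ (-2 * (D + 2)) * (C / (T / (2 * C ^ 2)) ^ (D / 2)) *
        (exp (-2 * C * b ^ 2 / T) * exp (-a ^ 2 / (C * (T / (2 * C ^ 2))))) := by ring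
    _ ≤ _ := mul_le_mul (gaussian_prefactor_le hD hT hC)
      (exp_mul_exp_le hT (one_pos.trans_le hC) hr) (by positivity) (by positivity)

end Gaussian

lemma sq_norm_sub_le {F : Type*} [SeminormedAddCommGroup F] (x y : F) :
    ‖x - y‖ ^ 2 ≤ 2 * ‖x‖ ^ 2 + 2 * ‖y‖ ^ 2 :=
  (pow_le_pow_left₀ (norm_nonneg _) (norm_sub_le x y) 2).trans (add_sq_le.trans_eq (by ring))

theorem invariant_density_bounds_general (d : ℕ) (T C : ℝ) (hT : 0 < T) (hC : 1 ≤ C)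
    (p : ℝ → EuclideanSpace ℝ (Fin d) → EuclideanSpace ℝ (Fin d) → ℝ)
    (m : EuclideanSpace ℝ (Fin d) → ℝ)
    (hpos : ∀ t : ℝ, 0 < t → ∀ x y, 0 < p t x y)
    (hCK : ∀ s u : ℝ, 0 < s → 0 < u → ∀ x y : EuclideanSpace ℝ (Fin d),
      p (s + u) x y = ∫ z, p s x z * p u z y)
    (haronson : ∀ t : ℝ, 0 < t → t ≤ T → ∀ x y : EuclideanSpace ℝ (Fin d),
      (1 / (C * t ^ ((d : ℝ) / 2))) * Real.exp (-C * ‖x - y‖ ^ 2 / t) ≤ p t x y ∧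
        p t x y ≤ (C / t ^ ((d : ℝ) / 2)) * Real.exp (-‖x - y‖ ^ 2 / (C * t)))
    (hinv : ∀ t : ℝ, 0 < t → ∀ y, m y = ∫ x, m x * p t x y)
    (hm1 : ∫ x, m x = 1)
    (hconv : ∀ x y, Tendsto (fun t => p t x y) atTop (nhds (m y))) :
    ∀ y : EuclideanSpace ℝ (Fin d),
      m y ≤ C * T ^ (-(d : ℝ) / 2) ∧
      2 ^ (-(d : ℝ)) * C ^ (-2 * ((d : ℝ) + 2)) * Real.exp (-2 * C * ‖y‖ ^ 2 / T) * m 0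
        ≤ m y := by
  have hC0 : 0 < C := one_pos.trans_le hC
  intro y
  constructor
  · exact invariant_le_of_kernel_le (nonneg_of_tendsto_kernel hpos hconv) hm1 (hinv T hT y)
      (fun x => (hpos T hT x y).le)
      fun x => (haronson T hT le_rfl x y).2.trans (div_rpow_mul_exp_le hC0.le hT _)
  · set u := T / (2 * C ^ 2)
    have hu : 0 < u := by positivity
    have huT : u ≤ T := div_le_self hT.le (by nlinarith)
    refine mul_le_of_kernel_comparison hpos hCK hconv hu hT (fun z => ?_) 0
    calc _ ≤ 2 ^ (-(d : ℝ)) * C ^ (-2 * ((d : ℝ) + 2)) * exp (-2 * C * ‖y‖ ^ 2 / T) *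
          (C / u ^ ((d : ℝ) / 2) * exp (-‖z‖ ^ 2 / (C * u))) := by
          gcongr
          simpa using (haronson u hu huT z 0).2
      _ ≤ 1 / (C * T ^ ((d : ℝ) / 2)) * exp (-C * ‖z - y‖ ^ 2 / T) :=
          gaussian_comparison d.cast_nonneg hT hC (sq_norm_sub_le z y)
      _ ≤ p T z y := (haronson T hT le_rfl z y).1

theorem invariant_density_bounds (d : ℕ) (T C : ℝ) (hT : 0 < T) (hC : 1 ≤ C)
    (p : ℝ → EuclideanSpace ℝ (Fin d) → EuclideanSpace ℝ (Fin d) → ℝ)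
    (m : EuclideanSpace ℝ (Fin d) → ℝ)
    (hpos : ∀ t : ℝ, 0 < t → ∀ x y, 0 < p t x y)
    (hCK : ∀ s u : ℝ, 0 < s → 0 < u → ∀ x y : EuclideanSpace ℝ (Fin d),
      p (s + u) x y = ∫ z, p s x z * p u z y)
    (haronson : ∀ t : ℝ, 0 < t → t ≤ T → ∀ x y : EuclideanSpace ℝ (Fin d),
      (1 / (C * t ^ ((d : ℝ) / 2))) * Real.exp (-C * ‖x - y‖ ^ 2 / t) ≤ p t x y ∧
        p t x y ≤ (C / t ^ ((d : ℝ) / 2)) * Real.exp (-‖x - y‖ ^ 2 / (C * t)))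
    (hinv : ∀ t : ℝ, 0 < t → ∀ y, m y = ∫ x, m x * p t x y)
    (hm1 : ∫ x, m x = 1)
    (hmc : Continuous m)
    (hconv : ∀ x y, Tendsto (fun t => p t x y) atTop (nhds (m y))) :
    ∀ y : EuclideanSpace ℝ (Fin d),
      m y ≤ C * T ^ (-(d : ℝ) / 2) ∧
      2 ^ (-(d : ℝ)) * C ^ (-2 * ((d : ℝ) + 2)) * Real.exp (-2 * C * ‖y‖ ^ 2 / T) * m 0
        ≤ m y :=
  invariant_density_bounds_general d T C hT hC p m hpos hCK haronson hinv hm1 hconv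
end

section
/- Let P, Q be Borel probability measures on ℝ^d, r ∈ [1,2), and suppose the r-Wasserstein transport cost T_r(P,Q) := inf{ ∫ |y-x|^r dμ : μ a coupling of P and Q } is finite. Assume the two-sided comparison T_r(P,Q) - ‖σ‖^r t^{r/2} ≤ (1-ε)^{1-r}( t^{r-1} V(t) + ε^{1-r} ‖σ‖^r t^{r/2}) for all ε ∈ (0,1) [lower bound (2.6)] and t^{r-1} V(t) ≤ T_r(P,Q) + (2/(2-r)) ‖σ‖^r t^{r/2} [upper bound (2.2)], for a function V : (0,T] → [0,∞) and constant ‖σ‖ ≥ 0. Then for r ∈ [1, 3/2): lim_{t→0} ( V(t) - t^{1-r} T_r(P,Q) ) = 0. -/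
open Filter Set

theorem short_time_asymptotics (T r Tr s : ℝ) (hT : 0 < T) (hr1 : 1 ≤ r)
    (hr2 : r < 3 / 2) (hTr : 0 ≤ Tr) (hs : 0 ≤ s)
    (V : ℝ → ℝ) (hV0 : ∀ t ∈ Set.Ioc (0:ℝ) T, 0 ≤ V t)
    (hlow : ∀ t ∈ Set.Ioc (0:ℝ) T, ∀ ε ∈ Set.Ioo (0:ℝ) 1,
      Tr - s ^ r * t ^ (r / 2) ≤
        (1 - ε) ^ (1 - r) * (t ^ (r - 1) * V t + ε ^ (1 - r) * s ^ r * t ^ (r / 2)))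
    (hup : ∀ t ∈ Set.Ioc (0:ℝ) T,
      t ^ (r - 1) * V t ≤ Tr + (2 / (2 - r)) * s ^ r * t ^ (r / 2)) :
    Tendsto (fun t => V t - t ^ (1 - r) * Tr) (nhdsWithin 0 (Set.Ioi 0)) (nhds 0) := by
  have hsr : (0:ℝ) ≤ s ^ r := Real.rpow_nonneg hs r
  have h2r : (0:ℝ) < 2 - r := by linarith
  set C : ℝ := Tr + 2 * s ^ r + 2 / (2 - r) * s ^ r with hCdef
  have hC0 : 0 ≤ C := by
    have h : 0 ≤ 2 / (2 - r) * s ^ r := by positivity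
    have h' : 0 ≤ 2 * s ^ r := by linarith
    rw [hCdef]; linarith
  have hexp : (0:ℝ) < 3 / 2 - r := by linarith
  have key : ∀ᶠ t in nhdsWithin (0:ℝ) (Set.Ioi 0),
      ‖V t - t ^ (1 - r) * Tr‖ ≤ C * t ^ (3 / 2 - r) := by
    filter_upwards [Ioo_mem_nhdsGT_of_mem
      (show (0:ℝ) ∈ Ico (0:ℝ) (min T 1) from ⟨le_refl 0, lt_min hT one_pos⟩)] with t ht
    obtain ⟨ht0, htm⟩ := ht
    have htT : t ≤ T := le_of_lt (lt_of_lt_of_le htm (min_le_left _ _))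
    have ht1 : t < 1 := lt_of_lt_of_le htm (min_le_right _ _)
    have htmem : t ∈ Set.Ioc (0:ℝ) T := ⟨ht0, htT⟩
    have hmul : ∀ x y : ℝ, t ^ x * t ^ y = t ^ (x + y) :=
      fun x y => (Real.rpow_add ht0 x y).symm
    have hb0 : 0 < t ^ (1 - r) := Real.rpow_pos_of_pos ht0 _
    have hba : t ^ (1 - r) * t ^ (r - 1) = 1 := by
      rw [hmul]; norm_num
    have hX0 : 0 ≤ s ^ r * t ^ (r / 2) := by positivity
    -- exponent comparisons
    have hpow1 : t ^ (1 - r / 2) ≤ t ^ (3 / 2 - r) :=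
      Real.rpow_le_rpow_of_exponent_ge ht0 ht1.le (by linarith)
    have hpow1' : t ^ (1 - r) * t ^ (r / 2) = t ^ (1 - r / 2) := by rw [hmul]; ring_nf
    have htpos : (0:ℝ) ≤ t ^ (3 / 2 - r) := (Real.rpow_pos_of_pos ht0 _).le
    -- upper bound part
    have hupper : V t - t ^ (1 - r) * Tr ≤ 2 / (2 - r) * s ^ r * t ^ (3 / 2 - r) := by
      have h := hup t htmem
      have h2 : t ^ (1 - r) * (t ^ (r - 1) * V t) ≤
          t ^ (1 - r) * (Tr + 2 / (2 - r) * s ^ r * t ^ (r / 2)) :=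
        mul_le_mul_of_nonneg_left h hb0.le
      have hV : t ^ (1 - r) * (t ^ (r - 1) * V t) = V t := by
        rw [← mul_assoc, hba, one_mul]
      rw [hV] at h2
      have : t ^ (1 - r) * (Tr + 2 / (2 - r) * s ^ r * t ^ (r / 2)) =
          t ^ (1 - r) * Tr + 2 / (2 - r) * s ^ r * (t ^ (1 - r) * t ^ (r / 2)) := by ring
      rw [this, hpow1'] at h2
      have h3 : 2 / (2 - r) * s ^ r * t ^ (1 - r / 2) ≤
          2 / (2 - r) * s ^ r * t ^ (3 / 2 - r) := by
        apply mul_le_mul_of_nonneg_left hpow1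
        positivity
      linarith
    -- lower bound part
    set ε : ℝ := t ^ (1 / 2 : ℝ) with hεdef
    have hε0 : 0 < ε := Real.rpow_pos_of_pos ht0 _
    have hε1 : ε < 1 := Real.rpow_lt_one ht0.le ht1 (by norm_num)
    have h1ε : (0:ℝ) < 1 - ε := by linarith
    have hεr : ε ^ (1 - r) * t ^ (r / 2) = ε := by
      rw [hεdef, ← Real.rpow_mul ht0.le, hmul]
      congr 1; ring
    have hbε : t ^ (1 - r) * ε = t ^ (3 / 2 - r) := by
      rw [hεdef, hmul]; congr 1; ring
    have hp1 : (1 - ε) ^ (r - 1) ≤ 1 :=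
      Real.rpow_le_one h1ε.le (by linarith) (by linarith)
    have hp2 : 1 - ε ≤ (1 - ε) ^ (r - 1) := by
      have := Real.rpow_le_rpow_of_exponent_ge h1ε (by linarith) (by linarith : r - 1 ≤ 1)
      rwa [Real.rpow_one] at this
    have hpq : (1 - ε) ^ (r - 1) * (1 - ε) ^ (1 - r) = 1 := by
      rw [← Real.rpow_add h1ε]; norm_num
    have h := hlow t htmem ε ⟨hε0, hε1⟩
    have h2 : (1 - ε) ^ (r - 1) * (Tr - s ^ r * t ^ (r / 2)) ≤
        t ^ (r - 1) * V t + ε ^ (1 - r) * s ^ r * t ^ (r / 2) := by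
      have := mul_le_mul_of_nonneg_left h (Real.rpow_pos_of_pos h1ε (r - 1)).le
      calc (1 - ε) ^ (r - 1) * (Tr - s ^ r * t ^ (r / 2))
          ≤ (1 - ε) ^ (r - 1) * ((1 - ε) ^ (1 - r) *
            (t ^ (r - 1) * V t + ε ^ (1 - r) * s ^ r * t ^ (r / 2))) := this
        _ = ((1 - ε) ^ (r - 1) * (1 - ε) ^ (1 - r)) *
            (t ^ (r - 1) * V t + ε ^ (1 - r) * s ^ r * t ^ (r / 2)) := by ring
        _ = _ := by rw [hpq, one_mul]
    have hεrX : ε ^ (1 - r) * s ^ r * t ^ (r / 2) = s ^ r * ε := by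
      rw [mul_comm (ε ^ (1 - r)) (s ^ r), mul_assoc, hεr]
    rw [hεrX] at h2
    -- A - Tr ≥ -ε*Tr - X - s^r * ε  where A = t^(r-1)*V t, X = s^r * t^(r/2)
    have hA : t ^ (r - 1) * V t - Tr ≥
        -(ε * Tr) - s ^ r * t ^ (r / 2) - s ^ r * ε := by
      nlinarith [mul_le_mul_of_nonneg_right hp2 hTr, mul_le_mul_of_nonneg_right hp1 hX0]
    have hlower : V t - t ^ (1 - r) * Tr ≥
        -(Tr * t ^ (3 / 2 - r) + s ^ r * t ^ (1 - r / 2) + s ^ r * t ^ (3 / 2 - r)) := by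
      have h3 := mul_le_mul_of_nonneg_left hA hb0.le
      have hV : t ^ (1 - r) * (t ^ (r - 1) * V t) = V t := by
        rw [← mul_assoc, hba, one_mul]
      calc V t - t ^ (1 - r) * Tr
          = t ^ (1 - r) * (t ^ (r - 1) * V t - Tr) := by rw [mul_sub, hV]
        _ ≥ t ^ (1 - r) * (-(ε * Tr) - s ^ r * t ^ (r / 2) - s ^ r * ε) := h3
        _ = -(Tr * (t ^ (1 - r) * ε) + s ^ r * (t ^ (1 - r) * t ^ (r / 2))
              + s ^ r * (t ^ (1 - r) * ε)) := by ring
        _ = -(Tr * t ^ (3 / 2 - r) + s ^ r * t ^ (1 - r / 2) + s ^ r * t ^ (3 / 2 - r)) := by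
            rw [hbε, hpow1']
    have h4 : s ^ r * t ^ (1 - r / 2) ≤ s ^ r * t ^ (3 / 2 - r) :=
      mul_le_mul_of_nonneg_left hpow1 hsr
    have h5 : 0 ≤ 2 / (2 - r) * s ^ r * t ^ (3 / 2 - r) := by positivity
    have h6 : 0 ≤ Tr * t ^ (3 / 2 - r) := by positivity
    have h7 : 0 ≤ 2 * s ^ r * t ^ (3 / 2 - r) := by positivity
    have hCX : C * t ^ (3 / 2 - r) = Tr * t ^ (3 / 2 - r) + 2 * (s ^ r * t ^ (3 / 2 - r))
        + 2 / (2 - r) * s ^ r * t ^ (3 / 2 - r) := by rw [hCdef]; ring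
    rw [Real.norm_eq_abs, abs_le]
    constructor
    · linarith
    · linarith
  have hlim : Tendsto (fun t : ℝ => C * t ^ (3 / 2 - r))
      (nhdsWithin 0 (Set.Ioi 0)) (nhds 0) := by
    have h1 : Tendsto (fun t : ℝ => t ^ (3 / 2 - r)) (nhds 0) (nhds ((0:ℝ) ^ (3 / 2 - r))) :=
      (Real.continuousAt_rpow_const 0 _ (Or.inr hexp.le)).tendsto
    rw [Real.zero_rpow hexp.ne'] at h1
    have h2 := (h1.mono_left (nhdsWithin_le_nhds (s := Set.Ioi 0))).const_mul C
    simpa using h2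
  exact squeeze_zero_norm' key hlim
end
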